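/- arXiv:1510.05579 — 2 statements merged into one kernel-verified Lean document; each statement's English description precedes it below -/
import Mathlib

section
/- Let r ≥ 2 be an integer and b = r² − 1, and assume that b − 1 is a prime number. If s and t are positive integers satisfying t² − b·s² = 1 − b, then there exist an integer k ≥ 0 and a sign ε ∈ {1, −1} such that s = T_k + ε·U_k and t = ε·T_k + b·U_k. -/
set_option maxHeartbeats 1000000

/-- T_0 = 1, T_1 = r, T_{k+2} = 2r·T_{k+1} − T_k. -/
def seqT (r : ℤ) : ℕ → ℤ
  | 0 => 1
  | 1 => r
  | k + 2 => 2 * r * seqT r (k + 1) - seqT r k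

/-- U_0 = 0, U_1 = 1, U_{k+2} = 2r·U_{k+1} − U_k. -/
def seqU (r : ℤ) : ℕ → ℤ
  | 0 => 0
  | 1 => 1
  | k + 2 => 2 * r * seqU r (k + 1) - seqU r k

lemma seqTU_succ (r : ℤ) (k : ℕ) :
    seqT r (k + 1) = r * seqT r k + (r ^ 2 - 1) * seqU r k ∧
    seqU r (k + 1) = seqT r k + r * seqU r k := by
  induction k with
  | zero => simp [seqT, seqU]
  | succ n ih =>
    obtain ⟨h1, h2⟩ := ih
    constructor
    · show seqT r (n + 2) = _
      rw [seqT]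
      linear_combination r * h1 - (r ^ 2 - 1) * h2
    · show seqU r (n + 2) = _
      rw [seqU]
      linear_combination r * h2 - h1

lemma seqTU_nonneg (r : ℤ) (hr : 2 ≤ r) (k : ℕ) :
    1 ≤ seqT r k ∧ 0 ≤ seqU r k := by
  induction k with
  | zero => simp [seqT, seqU]
  | succ n ih =>
    obtain ⟨h1, h2⟩ := ih
    obtain ⟨e1, e2⟩ := seqTU_succ r n
    have p1 : (0:ℤ) ≤ (r - 2) * (seqT r n - 1) :=
      mul_nonneg (by linarith) (by linarith)
    have p2 : (0:ℤ) ≤ (r ^ 2 - 1) * seqU r n :=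
      mul_nonneg (by nlinarith) h2
    have p3 : (0:ℤ) ≤ r * seqU r n := mul_nonneg (by linarith) h2
    constructor <;> nlinarith

lemma seqT_lt (r : ℤ) (hr : 2 ≤ r) (j : ℕ) :
    seqT r (j + 1) + 1 ≤ (r ^ 2 - 1) * seqU r (j + 1) := by
  obtain ⟨e1, e2⟩ := seqTU_succ r j
  obtain ⟨h1, h2⟩ := seqTU_nonneg r hr j
  have p1 : (0:ℤ) ≤ (r ^ 2 - r - 2) * (seqT r j - 1) :=
    mul_nonneg (by nlinarith) (by linarith)
  have p2 : (0:ℤ) ≤ ((r ^ 2 - 1) * (r - 1) - r) * seqU r j :=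
    mul_nonneg (by nlinarith) h2
  nlinarith

lemma descent (r : ℤ) (hr : 2 ≤ r) (hp : Prime (r ^ 2 - 2)) :
    ∀ n : ℕ, ∀ s t : ℤ, s ≤ (n : ℤ) → 0 < s → 0 < t →
      t ^ 2 - (r ^ 2 - 1) * s ^ 2 = 1 - (r ^ 2 - 1) →
      ∃ (k : ℕ) (ε : ℤ), (ε = 1 ∨ ε = -1) ∧ s = seqT r k + ε * seqU r k ∧
        t = ε * seqT r k + (r ^ 2 - 1) * seqU r k := by
  intro n
  induction n using Nat.strong_induction_on with
  | _ n ih =>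
  intro s t hsn hs ht hpell
  rcases eq_or_lt_of_le (show (1:ℤ) ≤ s by omega) with hs1 | hs2
  · -- s = 1
    have hs1' : s = 1 := hs1.symm
    subst hs1'
    have ht1 : t = 1 := by nlinarith
    exact ⟨0, 1, Or.inl rfl, by simp [seqT, seqU], by simp [seqT, seqU]; linarith⟩
  · -- 2 ≤ s
    have hs2' : 2 ≤ s := by omega
    rcases le_or_gt t ((r - 1) * s) with hcase | hcase
    · -- impossible by primality
      exfalso
      have htsq : t * t ≤ ((r - 1) * s) * ((r - 1) * s) :=
        mul_self_le_mul_self (by linarith) hcase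
      have hsq : (2 * r - 2) * s ^ 2 ≤ r ^ 2 - 2 := by nlinarith
      have hr3 : 3 ≤ r := by
        rcases eq_or_lt_of_le hr with h | h
        · exfalso; nlinarith
        · linarith
      have hts : t + s < r ^ 2 - 2 := by
        have e1 : (2 * r - 2) * ((r * s) ^ 2) ≤ (2 * r - 2) * ((r ^ 2 - 2) ^ 2) := by
          nlinarith [sq_nonneg r, sq_nonneg s]
        have e3 : (r * s) ^ 2 ≤ (r ^ 2 - 2) ^ 2 := by
          have h2r : (0:ℤ) < 2 * r - 2 := by linarith
          exact le_of_mul_le_mul_left e1 h2r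
        nlinarith [sq_nonneg (r * s + (r ^ 2 - 2))]
      have hdvd : (r ^ 2 - 2) ∣ (t - s) * (t + s) :=
        ⟨s ^ 2 - 1, by linear_combination hpell⟩
      rcases hp.dvd_mul.mp hdvd with h | h
      · have habs : t - s = 0 := by
          rcases eq_or_ne (t - s) 0 with h0 | h0
          · exact h0
          · exfalso
            have := Int.le_of_dvd (abs_pos.mpr h0) ((dvd_abs _ _).mpr h)
            have : |t - s| < r ^ 2 - 2 := abs_lt.mpr ⟨by linarith, by linarith⟩
            omega
        have hts' : t = s := by linarith
        subst hts'
        nlinarith [mul_pos (show (0:ℤ) < r ^ 2 - 2 by nlinarith)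
          (show (0:ℤ) < t ^ 2 - 1 by nlinarith)]
      · have := Int.le_of_dvd (by linarith) h
        linarith
    · -- descent step
      have hb1 : (0:ℤ) < r ^ 2 - 1 := by nlinarith
      have htrs : t < r * s := by nlinarith [sq_nonneg s, mul_pos (mul_pos (by linarith : (0:ℤ) < r) hs) ht]
      set s' : ℤ := r * s - t with hs'def
      set t' : ℤ := r * t - (r ^ 2 - 1) * s with ht'def
      have hs'1 : 1 ≤ s' := by omega
      have hs's : s' < s := by nlinarith
      have hpell' : t' ^ 2 - (r ^ 2 - 1) * s' ^ 2 = 1 - (r ^ 2 - 1) := by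
        rw [hs'def, ht'def]; linear_combination hpell
      have ht'ne : t' ≠ 0 := by
        intro h0
        rw [h0] at hpell'
        nlinarith
      have hn1 : 1 ≤ n := by
        have : (1:ℤ) ≤ n := by linarith
        exact_mod_cast this
      have hs'n : s' ≤ ((n - 1 : ℕ) : ℤ) := by
        have : ((n - 1 : ℕ) : ℤ) = (n : ℤ) - 1 := by
          push_cast [hn1]; ring
        rw [this]; linarith
      rcases lt_or_gt_of_ne ht'ne with ht'neg | ht'pos
      · -- t' < 0 : conjugate branch
        obtain ⟨k, ε, hε, h1, h2⟩ :=
          ih (n - 1) (by omega) s' (-t') hs'n (by linarith) (by linarith)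
            (by linear_combination hpell')
        rw [hs'def] at h1
        rw [ht'def] at h2
        cases k with
        | zero =>
          simp [seqT, seqU] at h1 h2
          have hε1 : ε = 1 := by
            rcases hε with h | h
            · exact h
            · exfalso; rw [h] at h2; rw [ht'def] at ht'neg; linarith
          rw [hε1] at h2
          refine ⟨1, -1, Or.inr rfl, ?_, ?_⟩
          · simp [seqT, seqU]
            linear_combination r * h1 - h2
          · simp [seqT, seqU]
            linear_combination (r ^ 2 - 1) * h1 - r * h2
        | succ j =>
          exfalso
          obtain ⟨e1, e2⟩ := seqTU_succ r j
          rw [e1, e2] at h1 h2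
          have ht_eq : t = -ε * seqT r j - (r ^ 2 - 1) * seqU r j := by
            linear_combination (r ^ 2 - 1) * h1 - r * h2
          have hs_eq : s = seqT r j + ε * seqU r j := by
            linear_combination r * h1 - h2
          obtain ⟨q1, q2⟩ := seqTU_nonneg r hr j
          rcases hε with h | h
          · rw [h] at ht_eq
            have : (0:ℤ) ≤ (r ^ 2 - 1) * seqU r j :=
              mul_nonneg (by linarith) q2
            linarith
          · rw [h] at ht_eq hs_eq
            cases j with
            | zero => simp [seqT, seqU] at hs_eq; omega
            | succ i =>
              have := seqT_lt r hr i
              linarith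
      · -- t' > 0 : standard descent
        obtain ⟨k, ε, hε, h1, h2⟩ :=
          ih (n - 1) (by omega) s' t' hs'n (by linarith) ht'pos hpell'
        rw [hs'def] at h1
        rw [ht'def] at h2
        obtain ⟨e1, e2⟩ := seqTU_succ r k
        refine ⟨k + 1, ε, hε, ?_, ?_⟩
        · rw [e1, e2]
          linear_combination r * h1 + h2
        · rw [e1, e2]
          linear_combination (r ^ 2 - 1) * h1 + r * h2

/-- If b = r² − 1 with b − 1 prime and t² − b·s² = 1 − b with s, t positive, then
s = T_k + ε·U_k and t = ε·T_k + b·U_k for some k ≥ 0 and ε ∈ {1, −1}. -/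
theorem stmt5 (r : ℤ) (hr : 2 ≤ r) (b : ℤ) (hb : b = r ^ 2 - 1)
    (hp : Prime (b - 1)) (s t : ℤ) (hs : 0 < s) (ht : 0 < t)
    (hpell : t ^ 2 - b * s ^ 2 = 1 - b) :
    ∃ (k : ℕ) (ε : ℤ), (ε = 1 ∨ ε = -1) ∧
      s = seqT r k + ε * seqU r k ∧ t = ε * seqT r k + b * seqU r k := by
  subst hb
  have hp' : Prime (r ^ 2 - 2) := by
    have : r ^ 2 - 1 - 1 = r ^ 2 - 2 := by ring
    rwa [this] at hp
  have hsn : s ≤ ((s.toNat : ℕ) : ℤ) := by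
    rw [Int.toNat_of_nonneg hs.le]
  exact descent r hr hp' s.toNat s t hsn hs ht hpell
end

section
/- Let r ≥ 1000 be an integer, b = r² − 1, α = r + √b, and for some k ≥ 1 and ε ∈ {1, −1} let s = T_k + ε·U_k, c = s² − 1, β = s + √c. Then |β − α^k|/α^k < 1.001/√b, and consequently |log β − k·log α| < 1.012/√b. -/
lemma seqStep (r : ℤ) (k : ℕ) :
    seqT r (k+1) = r * seqT r k + (r^2-1) * seqU r k ∧
    seqU r (k+1) = seqT r k + r * seqU r k := by
  induction k with
  | zero => simp [seqT, seqU]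
  | succ n ih =>
    obtain ⟨h1, h2⟩ := ih
    have hT : seqT r (n+2) = 2*r*seqT r (n+1) - seqT r n := rfl
    have hU : seqU r (n+2) = 2*r*seqU r (n+1) - seqU r n := rfl
    constructor
    · rw [hT, h1, h2]; ring
    · rw [hU, h1, h2]; ring

lemma seqPell (r : ℤ) (k : ℕ) :
    seqT r k ^ 2 - (r^2-1) * seqU r k ^ 2 = 1 := by
  induction k with
  | zero => simp [seqT, seqU]
  | succ n ih =>
    obtain ⟨h1, h2⟩ := seqStep r n
    rw [h1, h2]; ring_nf; ring_nf at ih; linarith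

lemma seqNonneg (r : ℤ) (hr : 1 ≤ r) (k : ℕ) :
    1 ≤ seqT r k ∧ 0 ≤ seqU r k := by
  induction k with
  | zero => simp [seqT, seqU]
  | succ n ih =>
    obtain ⟨h1, h2⟩ := seqStep r n
    obtain ⟨hT, hU⟩ := ih
    have hb0 : 0 ≤ (r^2-1) * seqU r n := mul_nonneg (by nlinarith) hU
    constructor
    · rw [h1]; nlinarith
    · rw [h2]; nlinarith

lemma seqLower (r : ℤ) (hr : 1 ≤ r) (k : ℕ) (hk : 1 ≤ k) :
    r ≤ seqT r k ∧ 1 ≤ seqU r k := by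
  obtain ⟨j, rfl⟩ := Nat.exists_eq_add_of_le hk
  obtain ⟨h1, h2⟩ := seqStep r j
  obtain ⟨hT, hU⟩ := seqNonneg r hr j
  rw [show 1 + j = j + 1 by ring, h1, h2]
  have hb0 : 0 ≤ (r^2-1) * seqU r j := mul_nonneg (by nlinarith) hU
  constructor <;> nlinarith

lemma powEq (r : ℤ) (b : ℤ) (hb : b = r^2 - 1) (hb0 : (0:ℝ) ≤ (b:ℝ)) (k : ℕ) :
    ((r:ℝ) + Real.sqrt b) ^ k = (seqT r k : ℝ) + (seqU r k : ℝ) * Real.sqrt b := by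
  induction k with
  | zero => simp [seqT, seqU]
  | succ n ih =>
    obtain ⟨h1, h2⟩ := seqStep r n
    rw [pow_succ, ih, h1, h2]
    have hsq : Real.sqrt b ^ 2 = (b:ℝ) := Real.sq_sqrt hb0
    push_cast [hb]
    push_cast [hb] at hsq
    linear_combination (seqU r n : ℝ) * hsq

set_option maxHeartbeats 2000000 in
lemma auxReal (T U S A C sb : ℝ)
    (hT : 1000 ≤ T) (hU : 1 ≤ U) (hS : 999 ≤ S)
    (hSl : T - U ≤ S) (hSu : S ≤ T + U)
    (hsb999 : 999 ≤ sb)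
    (hA : A = U * sb) (hA2 : A ^ 2 = T ^ 2 - 1)
    (hC0 : 0 ≤ C) (hC2 : C ^ 2 = S ^ 2 - 1) :
    |(S + C) - (T + A)| / (T + A) < 1.001 / sb ∧
    |Real.log (S + C) - Real.log (T + A)| < 1.012 / sb := by
  have hsb0 : (0:ℝ) ≤ sb := by linarith
  have hA0 : (0:ℝ) ≤ A := hA ▸ mul_nonneg (by linarith) hsb0
  have hAleT : A ≤ T := by nlinarith [hA2, hA0, hT]
  have hAgeT : T - 1 ≤ A := by nlinarith [hA2, hA0, hT]
  have hCleS : C ≤ S := by nlinarith [hC2, hC0, hS]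
  have hCgeS : S - 1 ≤ C := by nlinarith [hC2, hC0, hS]
  have hCApos : (0:ℝ) < C + A := by linarith
  have hTApos : (0:ℝ) < T + A := by linarith
  have hsbpos : (0:ℝ) < sb := by linarith
  have habs1 : |S - T| ≤ U := abs_le.mpr ⟨by linarith, by linarith⟩
  have hCA2 : (C - A) * (C + A) = (S - T) * (S + T) := by
    have : C ^ 2 - A ^ 2 = S ^ 2 - T ^ 2 := by rw [hC2, hA2]; ring
    nlinarith [this]
  have hCAabs : |C - A| ≤ U * (S + T) / (C + A) := by
    rw [le_div_iff₀ hCApos]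
    have h1 : |C - A| * (C + A) = |S - T| * (S + T) := by
      rw [← abs_of_pos hCApos, ← abs_mul, hCA2, abs_mul,
        abs_of_pos (show (0:ℝ) < S + T by linarith)]
    rw [h1]
    exact mul_le_mul_of_nonneg_right habs1 (by linarith)
  have hnum : |(S + C) - (T + A)| ≤ U + U * (S + T) / (C + A) := by
    have e : (S + C) - (T + A) = (S - T) + (C - A) := by ring
    rw [e]
    exact le_trans (abs_add_le _ _) (add_le_add habs1 hCAabs)
  have hkey : 1000 * (A * (S + T)) < (1001 * T + A) * (C + A) := by
    have k1 : A * (S + T) ≤ T * (S + T) :=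
      mul_le_mul_of_nonneg_right hAleT (by linarith)
    have k2 : (1001 * T + A) * (S + T - 2) ≤ (1001 * T + A) * (C + A) :=
      mul_le_mul_of_nonneg_left (by linarith) (by linarith)
    have p1 : (0:ℝ) ≤ (A - (T - 1)) * (S + T) :=
      mul_nonneg (by linarith) (by linarith)
    have p2 : (0:ℝ) ≤ (2 * T - 1) * (S + T - 1999) :=
      mul_nonneg (by linarith) (by linarith)
    have k3 : 1000 * (T * (S + T)) < (1001 * T + A) * (S + T - 2) := by
      nlinarith [p1, p2]
    linarith
  have hpart1 : |(S + C) - (T + A)| / (T + A) < 1.001 / sb := by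
    rw [div_lt_div_iff₀ hTApos hsbpos]
    have e1 : (U + U * (S + T) / (C + A)) * sb = A + A * (S + T) / (C + A) := by
      rw [hA]; field_simp
    have h2 : A * (S + T) / (C + A) < 1.001 * T + 0.001 * A := by
      rw [div_lt_iff₀ hCApos]; nlinarith [hkey]
    calc |(S + C) - (T + A)| * sb ≤ (U + U * (S + T) / (C + A)) * sb :=
          mul_le_mul_of_nonneg_right hnum hsb0
      _ = A + A * (S + T) / (C + A) := e1
      _ < 1.001 * (T + A) := by linarith
  refine ⟨hpart1, ?_⟩
  have hβpos : (0:ℝ) < S + C := by linarith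
  have hlogeq : Real.log (S + C) - Real.log (T + A) = Real.log ((S + C) / (T + A)) := by
    rw [Real.log_div hβpos.ne' hTApos.ne']
  set x := (S + C) / (T + A) with hxdef
  have hxpos : 0 < x := div_pos hβpos hTApos
  have hx1 : |x - 1| < 1.001 / sb := by
    have e : x - 1 = ((S + C) - (T + A)) / (T + A) := by
      rw [hxdef]; field_simp
    rw [e, abs_div, abs_of_pos hTApos]
    exact hpart1
  have hsmall : 1.001 / sb ≤ 0.002 := by
    rw [div_le_iff₀ hsbpos]; linarith
  have hxlow : (0.998:ℝ) < x := by
    have := abs_lt.mp hx1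
    linarith [this.1]
  rw [hlogeq]
  rcases le_or_gt 1 x with h1 | h1
  · rw [abs_of_nonneg (Real.log_nonneg h1)]
    have h2 : Real.log x ≤ x - 1 := Real.log_le_sub_one_of_pos hxpos
    have h3 : x - 1 < 1.001 / sb := by
      have := abs_lt.mp hx1; linarith [this.2]
    have h4 : (1.001:ℝ) / sb < 1.012 / sb := by
      rw [div_lt_div_iff₀ hsbpos hsbpos]; linarith
    linarith
  · have h2 : -Real.log x ≤ x⁻¹ - 1 := by
      have h := Real.log_le_sub_one_of_pos (inv_pos.mpr hxpos)
      rw [Real.log_inv] at h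
      linarith
    rw [abs_of_neg (Real.log_neg hxpos h1)]
    have h3 : (1 - x) * sb < 1.001 := by
      have := abs_lt.mp hx1
      have h5 : 1 - x < 1.001 / sb := by linarith [this.1]
      calc (1 - x) * sb < (1.001 / sb) * sb := mul_lt_mul_of_pos_right h5 hsbpos
        _ = 1.001 := by field_simp
    have h4 : x⁻¹ - 1 < 1.012 / sb := by
      rw [inv_eq_one_div, div_sub' (ne_of_gt hxpos), div_lt_div_iff₀ hxpos hsbpos]
      nlinarith [hxlow, hsbpos, h3]
    linarith

set_option maxHeartbeats 1000000 in
/-- For r ≥ 1000, b = r² − 1, s = T_k + ε·U_k, c = s² − 1, α = r + √b, β = s + √c: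
|β − α^k|/α^k < 1.001/√b and |log β − k·log α| < 1.012/√b. -/
theorem stmt16 (r : ℤ) (hr : 1000 ≤ r) (b : ℤ) (hb : b = r ^ 2 - 1)
    (k : ℕ) (hk : 1 ≤ k) (ε : ℤ) (hε : ε = 1 ∨ ε = -1)
    (s c : ℤ) (hs : s = seqT r k + ε * seqU r k) (hc : c = s ^ 2 - 1)
    (α β : ℝ)
    (hα : α = (r : ℝ) + Real.sqrt (b : ℝ)) (hβ : β = (s : ℝ) + Real.sqrt (c : ℝ)) :
    |β - α ^ k| / α ^ k < 1.001 / Real.sqrt (b : ℝ) ∧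
    |Real.log β - (k : ℝ) * Real.log α| < 1.012 / Real.sqrt (b : ℝ) := by
  -- Integer facts
  have hr1 : (1:ℤ) ≤ r := by linarith
  have hpell := seqPell r k
  obtain ⟨hTr, hU1i⟩ := seqLower r hr1 k hk
  have hTi1000 : 1000 ≤ seqT r k := le_trans hr hTr
  have hUi0 : (0:ℤ) ≤ seqU r k := by linarith
  have h999999 : 999999 * seqU r k ^ 2 + 1 ≤ seqT r k ^ 2 := by
    have h1 : (0:ℤ) ≤ (r ^ 2 - 1 - 999999) * seqU r k ^ 2 :=
      mul_nonneg (by nlinarith) (sq_nonneg _)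
    nlinarith [hpell]
  have hbig : 999 * seqU r k + 1 ≤ seqT r k := by
    by_contra hcon
    push_neg at hcon
    have hcon' : seqT r k ≤ 999 * seqU r k := by linarith
    have h2 : seqT r k ^ 2 ≤ (999 * seqU r k) ^ 2 :=
      pow_le_pow_left₀ (by linarith) hcon' 2
    nlinarith [sq_nonneg (seqU r k), hU1i]
  have hsl : seqT r k - seqU r k ≤ s ∧ s ≤ seqT r k + seqU r k := by
    rcases hε with h | h <;> rw [h] at hs <;> constructor <;> linarith
  have hs999 : (999:ℤ) ≤ s := by linarith [hsl.1]
  -- Real setup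
  have hbR : (999999:ℝ) ≤ (b:ℝ) := by
    have : (999999:ℤ) ≤ b := by rw [hb]; nlinarith
    exact_mod_cast this
  have hb0 : (0:ℝ) ≤ (b:ℝ) := by linarith
  have hsb0 : 0 ≤ Real.sqrt (b:ℝ) := Real.sqrt_nonneg _
  have hsb2 : Real.sqrt (b:ℝ) ^ 2 = (b:ℝ) := Real.sq_sqrt hb0
  have hsb999 : (999:ℝ) ≤ Real.sqrt (b:ℝ) := by nlinarith [hsb2, hsb0, hbR]
  have hT : (1000:ℝ) ≤ (seqT r k : ℝ) := by exact_mod_cast hTi1000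
  have hU : (1:ℝ) ≤ (seqU r k : ℝ) := by exact_mod_cast hU1i
  have hS : (999:ℝ) ≤ ((s:ℤ):ℝ) := by exact_mod_cast hs999
  have hSl : (seqT r k : ℝ) - (seqU r k : ℝ) ≤ ((s:ℤ):ℝ) := by exact_mod_cast hsl.1
  have hSu : ((s:ℤ):ℝ) ≤ (seqT r k : ℝ) + (seqU r k : ℝ) := by exact_mod_cast hsl.2
  have hpellR : ((seqT r k : ℝ)) ^ 2 - (b:ℝ) * ((seqU r k : ℝ)) ^ 2 = 1 := by
    rw [hb]; push_cast; push_cast at hpell; exact_mod_cast hpell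
  have hA2 : ((seqU r k : ℝ) * Real.sqrt (b:ℝ)) ^ 2 = (seqT r k : ℝ) ^ 2 - 1 := by
    rw [mul_pow, hsb2]; linarith [hpellR]
  have hc0 : (0:ℝ) ≤ (c:ℝ) := by
    have : (0:ℤ) ≤ c := by rw [hc]; nlinarith
    exact_mod_cast this
  have hC0 : (0:ℝ) ≤ Real.sqrt (c:ℝ) := Real.sqrt_nonneg _
  have hC2 : Real.sqrt (c:ℝ) ^ 2 = ((s:ℤ):ℝ) ^ 2 - 1 := by
    rw [Real.sq_sqrt hc0]
    have : (c:ℝ) = ((s:ℤ):ℝ) ^ 2 - 1 := by rw [hc]; push_cast; ring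
    linarith
  obtain ⟨main1, main2⟩ := auxReal (seqT r k : ℝ) (seqU r k : ℝ) ((s:ℤ):ℝ)
    ((seqU r k : ℝ) * Real.sqrt (b:ℝ)) (Real.sqrt (c:ℝ)) (Real.sqrt (b:ℝ))
    hT hU hS hSl hSu hsb999 rfl hA2 hC0 hC2
  have hαk : α ^ k = (seqT r k : ℝ) + (seqU r k : ℝ) * Real.sqrt (b:ℝ) := by
    rw [hα, powEq r b hb hb0 k]
  have hβ' : β = ((s:ℤ):ℝ) + Real.sqrt (c:ℝ) := by rw [hβ]
  have hαpos : (0:ℝ) < α := by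
    rw [hα]
    have : (1000:ℝ) ≤ (r:ℝ) := by exact_mod_cast hr
    linarith [Real.sqrt_nonneg (b:ℝ)]
  constructor
  · rw [hβ', hαk]; exact main1
  · have hlog : (k:ℝ) * Real.log α = Real.log (α ^ k) := by rw [Real.log_pow]
    rw [hlog, hβ', hαk]
    exact main2
end
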